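/- Let α be a terminal-free pattern, let Δ_α be a Janus operating mode for α with head movement indicator ((d'_1,μ'_1),…,(d'_{k'},μ'_{k'})), let D_α := y_{d'_1}·y_{d'_2}·…·y_{d'_{k'}}, and let π := cn(Δ_α) + 1. Then there exists a total mapping co : var(α) → {1, 2, …, π} such that for all x, z ∈ var(α) with x ≠ z: if D_α can be factorised into D_α = β·x·γ·z·γ'·x·δ or into D_α = β·z·γ·x·γ'·z·δ, then co(x) ≠ co(z). -/

import Mathlib

/-! Patterns: variables are natural numbers; a terminal-free pattern is a
nonempty list of variables, with 1-based positions. -/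

/-- The variable at (1-based) position `j` of the pattern `α`. -/
def patAt (α : List ℕ) (j : ℕ) : ℕ := α.getD (j - 1) 0

/-- The set of (1-based) positions of the pattern `α` carrying the variable `x`. -/
def varpos (α : List ℕ) (x : ℕ) : Finset ℕ :=
  (Finset.Icc 1 α.length).filter (fun j => patAt α j = x)

/-- A matching order for the variable `x` in the pattern `α`: a sequence of
`|α|_x − 1` pairs of positions of `x`, each with smaller first component,
whose edge set makes the set of positions of `x` a connected graph. -/
def IsMatchingOrder (α : List ℕ) (x : ℕ) (M : List (ℕ × ℕ)) : Prop :=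
  M.length + 1 = α.count x ∧
  (∀ p ∈ M, p.1 ∈ varpos α x ∧ p.2 ∈ varpos α x ∧ p.1 < p.2) ∧
  ∀ a ∈ varpos α x, ∀ b ∈ varpos α x,
    Relation.ReflTransGen (fun u v => (u, v) ∈ M ∨ (v, u) ∈ M) a b

/-- A complete matching order for `α`: a tuple of `Σ_{x ∈ var(α)} (|α|_x − 1)`
matching positions containing, for every variable `x` of `α`, all the elements
of some matching order for `x` in `α`. -/
def IsCompleteMatchingOrder (α : List ℕ) (C : List (ℕ × ℕ)) : Prop :=
  ∃ M : ℕ → List (ℕ × ℕ),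
    (∀ x ∈ α.toFinset, IsMatchingOrder α x (M x)) ∧
    C.length = ∑ x ∈ α.toFinset, (α.count x - 1) ∧
    ∀ x ∈ α.toFinset, ∀ p ∈ M x, p ∈ C
/-! Janus operating modes. -/

/-- The two head markers: `lam` (λ) for the left head, `rho` (ρ) for the right head. -/
inductive Marker : Type
  | lam
  | rho
deriving DecidableEq

/-- The map `g` from Definition 4: `g(j,j') = (j+1, …, j'−1)` and
`g(j',j) = (j', j'−1, …, j)` for `j < j'`. -/
def gfun (j j' : ℕ) : List ℕ :=
  if j < j' then (List.range (j' - j - 1)).map (fun i => j + 1 + i)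
  else if j' < j then (List.range (j - j' + 1)).map (fun i => j - i)
  else []

/-- The position of the most recent entry with marker `m` among the first `j+1`
entries of `L`; if there is none, the first entry of `L` with marker `m`. -/
def latestEntry (L : List (ℕ × Marker)) (j : ℕ) (m : Marker) : Option ℕ :=
  match ((L.take (j + 1)).filter (fun e => decide (e.2 = m))).getLast? with
  | some e => some e.1
  | none => ((L.filter (fun e => decide (e.2 = m))).head?).map Prod.fst

/-- At every prefix of `L`, the most recent λ-entry is ≤ the most recent ρ-entry
(comparing with the first λ-entry resp. ρ-entry when none has occurred yet). -/
def GoodInterleaving (L : List (ℕ × Marker)) : Prop :=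
  ∀ j < L.length, ∀ pl pr,
    latestEntry L j Marker.lam = some pl → latestEntry L j Marker.rho = some pr → pl ≤ pr

/-- `Δ` is a Janus operating mode for `α`, derived from some complete matching
order `C` for `α` (with `(l_0, r_0) := (0, 0)`): each `D_i` is an interleaving
`D'_i` of `g(l_{i−1}, l_i)` with λ-markers and `g(r_{i−1}, r_i)` with ρ-markers
(preserving the relative order of each, and such that at every prefix the most
recent λ-entry is ≤ the most recent ρ-entry), followed by `(r_i, ρ), (l_i, λ)`. -/
def IsJanusOperatingMode (α : List ℕ) (Δ : List (List (ℕ × Marker))) : Prop :=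
  ∃ C : List (ℕ × ℕ),
    IsCompleteMatchingOrder α C ∧
    Δ.length = C.length ∧
    ∀ i < C.length,
      ∃ D' : List (ℕ × Marker),
        D'.filter (fun e => decide (e.2 = Marker.lam)) =
          (gfun (if i = 0 then 0 else (C.getD (i - 1) (0, 0)).1) (C.getD i (0, 0)).1).map
            (fun p => (p, Marker.lam)) ∧
        D'.filter (fun e => decide (e.2 = Marker.rho)) =
          (gfun (if i = 0 then 0 else (C.getD (i - 1) (0, 0)).2) (C.getD i (0, 0)).2).map
            (fun p => (p, Marker.rho)) ∧
        GoodInterleaving D' ∧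
        Δ.getD i [] =
          D' ++ [((C.getD i (0, 0)).2, Marker.rho), ((C.getD i (0, 0)).1, Marker.lam)]

open Classical in
/-- For a string `D` of variables (0-based indexing), `sVal D i` is the number of
variables `x ≠ D_i` having an occurrence both strictly before and strictly after
position `i` in `D`. -/
noncomputable def sVal (D : List ℕ) (i : ℕ) : ℕ :=
  (D.toFinset.filter (fun x =>
    x ≠ D.getD i 0 ∧ (∃ j, j < i ∧ D.getD j 0 = x) ∧
    ∃ j', i < j' ∧ j' < D.length ∧ D.getD j' 0 = x)).card

/-- The head movement indicator of a Janus operating mode: the concatenation of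
its tuples `D_1, …, D_k`. -/
def hmi (Δ : List (List (ℕ × Marker))) : List (ℕ × Marker) := Δ.flatten

/-- The string of variables `D_α = y_{d'_1} · y_{d'_2} · … · y_{d'_{k'}}`
associated with the head movement indicator of `Δ` and the pattern `α`. -/
def hmiVars (α : List ℕ) (Δ : List (List (ℕ × Marker))) : List ℕ :=
  (hmi Δ).map (fun e => patAt α e.1)

/-- The counter number of a Janus operating mode `Δ` for `α`:
`cn(Δ) = max{s_i | 1 ≤ i ≤ k'}`. -/
noncomputable def cnOf (α : List ℕ) (Δ : List (List (ℕ × Marker))) : ℕ :=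
  (Finset.range (hmiVars α Δ).length).sup (sVal (hmiVars α Δ))

/-- The variable distance of `α`: the smallest `k ≥ 0` such that for every
variable `x`, every factorisation `α = β·x·γ·x·δ` with `|γ|_x = 0` satisfies
`|var(γ)| ≤ k`. -/
noncomputable def vd (α : List ℕ) : ℕ :=
  sInf {k : ℕ | ∀ x : ℕ, ∀ β γ δ : List ℕ,
    α = β ++ [x] ++ γ ++ [x] ++ δ → γ.count x = 0 → γ.toFinset.card ≤ k}

/-! Colour the variables greedily in the order of their first occurrences in `D_α`. When `z` is
coloured at its first occurrence `i`, every already coloured variable `x` that conflicts with `z`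
occurs before `i` and, since one of `x·z·x`, `z·x·z` is a subsequence of `D_α`, again after `i`.
So there are at most `s_i ≤ cn(Δ_α)` of them, and one of the `cn(Δ_α) + 1` colours is free. -/

open Finset
open scoped List

namespace SimpleGraph

variable {V ι : Type*} [DecidableEq V] [LinearOrder ι] (G : SimpleGraph V) [DecidableRel G.Adj]

theorem exists_coloring_of_card_earlier_neighbors_le (f : V → ι) (k : ℕ) (s : Finset V)
    (hdeg : ∀ v ∈ s, #{w ∈ s | f w ≤ f v ∧ G.Adj v w} ≤ k) :
    ∃ co : V → ℕ, (∀ v, co v ∈ Icc 1 (k + 1)) ∧ ∀ v ∈ s, ∀ w ∈ s, G.Adj v w → co v ≠ co w := by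
  induction s using Finset.induction_on_max_value f with
  | empty => exact ⟨fun _ => 1, fun _ => by simp, by simp⟩
  | insert a s ha hmax ih =>
    have hsub : ∀ v ∈ s, {w ∈ s | f w ≤ f v ∧ G.Adj v w} ⊆
        {w ∈ insert a s | f w ≤ f v ∧ G.Adj v w} :=
      fun v _ => filter_subset_filter _ (subset_insert a s)
    obtain ⟨co, hco, hproper⟩ := ih fun v hv =>
      (card_le_card (hsub v hv)).trans (hdeg v (mem_insert_of_mem hv))
    set N := {w ∈ s | G.Adj a w}
    have hN : #N ≤ k := by
      refine (card_le_card fun w hw => ?_).trans (hdeg a (mem_insert_self a s))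
      simp only [N, mem_filter, mem_insert] at hw ⊢
      exact ⟨Or.inr hw.1, hmax w hw.1, hw.2⟩
    obtain ⟨c, hc, hcN⟩ : ∃ c ∈ Icc 1 (k + 1), c ∉ N.image co := by
      by_contra! h
      have := (card_le_card h).trans (card_image_le.trans hN)
      simp at this
    refine ⟨Function.update co a c, fun v => ?_, ?_⟩
    · rcases eq_or_ne v a with rfl | hva
      · simpa using hc
      · simpa [hva] using hco v
    · have hfree : ∀ w ∈ s, G.Adj a w → c ≠ co w := fun w hw hadj h =>
        hcN (mem_image.2 ⟨w, mem_filter.2 ⟨hw, hadj⟩, h.symm⟩)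
      have hne : ∀ w ∈ s, w ≠ a := fun w hw h => ha (h ▸ hw)
      simp only [mem_insert]
      rintro v (rfl | hv) w (rfl | hw) hadj
      · exact (G.irrefl hadj).elim
      · simpa [hne w hw] using hfree w hw hadj
      · simpa [hne v hv] using (hfree v hv hadj.symm).symm
      · simpa [hne v hv, hne w hw] using hproper v hv w hw hadj

end SimpleGraph

namespace List

variable {α : Type*}

theorem sublist_of_eq_append_singleton_append {D β γ γ' δ : List α} {x z : α}
    (h : D = β ++ [x] ++ γ ++ [z] ++ γ' ++ [x] ++ δ) : [x, z, x] <+ D := by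
  subst h
  simp

theorem exists_lt_getD_eq_of_pair_sublist [DecidableEq α] {D : List α} {z x : α} (d : α)
    (h : [z, x] <+ D) : ∃ j, D.idxOf z < j ∧ j < D.length ∧ D.getD j d = x := by
  induction D with
  | nil => simp at h
  | cons a t ih =>
    rcases eq_or_ne a z with rfl | haz
    · obtain ⟨j, hj, hjx⟩ := getElem_of_mem (singleton_sublist.1 h.of_cons_cons)
      exact ⟨j + 1, by simp, by simpa using hj, by simpa [hj] using hjx⟩
    · obtain ⟨j, hj, hjt, hjx⟩ := ih (h.of_cons_of_ne haz.symm)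
      exact ⟨j + 1, by simpa [idxOf_cons, haz] using hj, by simpa using hjt, by simpa using hjx⟩

end List

def interleavingGraph {α : Type*} (D : List α) : SimpleGraph α :=
  SimpleGraph.fromRel fun x z => [x, z, x] <+ D

theorem interleavingGraph_adj_iff {α : Type*} {D : List α} {x z : α} :
    (interleavingGraph D).Adj x z ↔ x ≠ z ∧ ([x, z, x] <+ D ∨ [z, x, z] <+ D) :=
  SimpleGraph.fromRel_adj _ _ _

theorem mem_of_interleavingGraph_adj {α : Type*} {D : List α} {x z : α}
    (h : (interleavingGraph D).Adj x z) : x ∈ D ∧ z ∈ D := by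
  obtain ⟨-, h | h⟩ := interleavingGraph_adj_iff.1 h <;>
    exact ⟨h.subset (by simp), h.subset (by simp)⟩

theorem card_earlier_interleavingGraph_neighbors_le_sVal (D : List ℕ)
    [DecidableRel (interleavingGraph D).Adj] {z : ℕ} (hz : z ∈ D) :
    #{x ∈ D.toFinset | D.idxOf x ≤ D.idxOf z ∧ (interleavingGraph D).Adj z x} ≤
      sVal D (D.idxOf z) := by
  refine card_le_card fun x hx => ?_
  simp only [mem_filter, List.mem_toFinset] at hx
  obtain ⟨hxD, hle, hadj⟩ := hx
  obtain ⟨hzx, hsub⟩ := interleavingGraph_adj_iff.1 hadj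
  have hlt : D.idxOf x < D.idxOf z :=
    hle.lt_of_ne fun h => hzx ((List.idxOf_inj hxD).1 h).symm
  have hpair : [z, x] <+ D := by
    rcases hsub with h | h
    · exact (by simp : [z, x] <+ [z, x, z]).trans h
    · exact (by simp : [z, x] <+ [x, z, x]).trans h
  have hgetD : ∀ y ∈ D, D.getD (D.idxOf y) 0 = y := fun y hy => by
    rw [List.getD_eq_getElem _ _ (List.idxOf_lt_length_iff.2 hy), List.getElem_idxOf]
  simp only [mem_filter, List.mem_toFinset]
  exact ⟨hxD, by rw [hgetD z hz]; exact hzx.symm, ⟨_, hlt, hgetD x hxD⟩,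
    List.exists_lt_getD_eq_of_pair_sublist 0 hpair⟩

theorem statement10_general (α : List ℕ)
    (Δ : List (List (ℕ × Marker))) :
    ∃ co : ℕ → ℕ,
      (∀ x ∈ α.toFinset, 1 ≤ co x ∧ co x ≤ cnOf α Δ + 1) ∧
      ∀ x ∈ α.toFinset, ∀ z ∈ α.toFinset, x ≠ z →
        ((∃ β γ γ' δ : List ℕ,
            hmiVars α Δ = β ++ [x] ++ γ ++ [z] ++ γ' ++ [x] ++ δ) ∨
         (∃ β γ γ' δ : List ℕ,
            hmiVars α Δ = β ++ [z] ++ γ ++ [x] ++ γ' ++ [z] ++ δ)) →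
        co x ≠ co z := by
  classical
  set D := hmiVars α Δ
  have hdeg : ∀ z ∈ D.toFinset,
      #{x ∈ D.toFinset | D.idxOf x ≤ D.idxOf z ∧ (interleavingGraph D).Adj z x} ≤ cnOf α Δ :=
    fun z hz => (card_earlier_interleavingGraph_neighbors_le_sVal D (List.mem_toFinset.1 hz)).trans
      (le_sup (mem_range.2 (List.idxOf_lt_length_iff.2 (List.mem_toFinset.1 hz))))
  obtain ⟨co, hrange, hproper⟩ :=
    (interleavingGraph D).exists_coloring_of_card_earlier_neighbors_le D.idxOf _ _ hdeg
  refine ⟨co, fun x _ => mem_Icc.1 (hrange x), fun x _ z _ hxz hfact => ?_⟩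
  have hadj : (interleavingGraph D).Adj x z := by
    refine interleavingGraph_adj_iff.2 ⟨hxz, ?_⟩
    rcases hfact with ⟨β, γ, γ', δ, h⟩ | ⟨β, γ, γ', δ, h⟩
    · exact Or.inl (List.sublist_of_eq_append_singleton_append h)
    · exact Or.inr (List.sublist_of_eq_append_singleton_append h)
  obtain ⟨hxD, hzD⟩ := mem_of_interleavingGraph_adj hadj
  exact hproper x (List.mem_toFinset.2 hxD) z (List.mem_toFinset.2 hzD) hadj

/-- the Claim in the proof of Theorem 1 of the paper. Let
`α` be a terminal-free pattern, `Δ` a Janus operating mode for `α`, `D_α` the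
string of variables associated with its head movement indicator, and
`π := cn(Δ) + 1`. Then there is a total mapping `co : var(α) → {1, …, π}` such
that for all distinct `x, z ∈ var(α)`: if `D_α` can be factorised as
`D_α = β·x·γ·z·γ'·x·δ` or as `D_α = β·z·γ·x·γ'·z·δ`, then `co(x) ≠ co(z)`. -/
theorem statement10 (α : List ℕ) (hα : α ≠ [])
    (Δ : List (List (ℕ × Marker))) (hΔ : IsJanusOperatingMode α Δ) :
    ∃ co : ℕ → ℕ,
      (∀ x ∈ α.toFinset, 1 ≤ co x ∧ co x ≤ cnOf α Δ + 1) ∧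
      ∀ x ∈ α.toFinset, ∀ z ∈ α.toFinset, x ≠ z →
        ((∃ β γ γ' δ : List ℕ,
            hmiVars α Δ = β ++ [x] ++ γ ++ [z] ++ γ' ++ [x] ++ δ) ∨
         (∃ β γ γ' δ : List ℕ,
            hmiVars α Δ = β ++ [z] ++ γ ++ [x] ++ γ' ++ [z] ++ δ)) →
        co x ≠ co z :=
  statement10_general α Δ
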